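/- arXiv:1412.7376 — 5 statements merged into one kernel-verified Lean document; each statement's English description precedes it below -/
import Mathlib

section
/- Let λ₁, λ₂, λ₃, λ₄ be pairwise distinct complex numbers and w_{ij} (1 ≤ i < j ≤ 4) complex numbers. Define ω_{ij}(λ) = (1/(λ−λ_i) − 1/(λ−λ_j)) w_{ij}. Then the relation ω₂₃(λ)ω₁₄(λ) − ω₁₃(λ)ω₂₄(λ) + ω₁₂(λ)ω₃₄(λ) = 0 holds for all λ ∉ {λ₁,λ₂,λ₃,λ₄} if and only if (λ₃−λ₂)(λ₄−λ₁)w₂₃w₁₄ − (λ₃−λ₁)(λ₄−λ₂)w₁₃w₂₄ + (λ₂−λ₁)(λ₄−λ₃)w₁₂w₃₄ = 0. -/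
/-!
Since `1/(λ - a) - 1/(λ - b) = (a - b)/((λ - a)(λ - b))` and each product `ω_ij ω_kl` in the
relation has `{i, j, k, l} = {1, 2, 3, 4}`, every term is a constant multiple of
`1/((λ - λ₁)(λ - λ₂)(λ - λ₃)(λ - λ₄))`. The relation is therefore this nonvanishing factor times
the `λ`-independent quadratic expression, and it suffices to test it at a single point off the
poles, which exists because `ℂ` is infinite.
-/

theorem simplePole_plucker_eq_div {K : Type*} [Field K] (l1 l2 l3 l4 lam : K)
    (w12 w13 w14 w23 w24 w34 : K)
    (h1 : lam ≠ l1) (h2 : lam ≠ l2) (h3 : lam ≠ l3) (h4 : lam ≠ l4) :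
    ((1/(lam - l2) - 1/(lam - l3)) * w23) * ((1/(lam - l1) - 1/(lam - l4)) * w14) -
      ((1/(lam - l1) - 1/(lam - l3)) * w13) * ((1/(lam - l2) - 1/(lam - l4)) * w24) +
      ((1/(lam - l1) - 1/(lam - l2)) * w12) * ((1/(lam - l3) - 1/(lam - l4)) * w34)
    = ((l3 - l2) * (l4 - l1) * w23 * w14 - (l3 - l1) * (l4 - l2) * w13 * w24 +
      (l2 - l1) * (l4 - l3) * w12 * w34) /
      ((lam - l1) * (lam - l2) * (lam - l3) * (lam - l4)) := by
  have e1 : lam - l1 ≠ 0 := sub_ne_zero.mpr h1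
  have e2 : lam - l2 ≠ 0 := sub_ne_zero.mpr h2
  have e3 : lam - l3 ≠ 0 := sub_ne_zero.mpr h3
  have e4 : lam - l4 ≠ 0 := sub_ne_zero.mpr h4
  rw [eq_div_iff (by positivity)]
  field_simp
  ring

theorem stmt2_general (l1 l2 l3 l4 : ℂ) (w12 w13 w14 w23 w24 w34 : ℂ) :
    (∀ lam : ℂ, lam ≠ l1 → lam ≠ l2 → lam ≠ l3 → lam ≠ l4 →
      ((1/(lam - l2) - 1/(lam - l3)) * w23) * ((1/(lam - l1) - 1/(lam - l4)) * w14) -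
      ((1/(lam - l1) - 1/(lam - l3)) * w13) * ((1/(lam - l2) - 1/(lam - l4)) * w24) +
      ((1/(lam - l1) - 1/(lam - l2)) * w12) * ((1/(lam - l3) - 1/(lam - l4)) * w34) = 0)
    ↔ (l3 - l2) * (l4 - l1) * w23 * w14 - (l3 - l1) * (l4 - l2) * w13 * w24 +
      (l2 - l1) * (l4 - l3) * w12 * w34 = 0 := by
  constructor
  · intro h
    obtain ⟨lam, hlam⟩ := Infinite.exists_notMem_finset ({l1, l2, l3, l4} : Finset ℂ)
    simp only [Finset.mem_insert, Finset.mem_singleton, not_or] at hlam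
    obtain ⟨h1, h2, h3, h4⟩ := hlam
    have hden : (lam - l1) * (lam - l2) * (lam - l3) * (lam - l4) ≠ 0 := by
      simp only [ne_eq, mul_eq_zero, sub_eq_zero, not_or]
      exact ⟨⟨⟨h1, h2⟩, h3⟩, h4⟩
    have := h lam h1 h2 h3 h4
    rwa [simplePole_plucker_eq_div l1 l2 l3 l4 lam _ _ _ _ _ _ h1 h2 h3 h4,
      div_eq_zero_iff, or_iff_left hden] at this
  · intro h lam h1 h2 h3 h4
    rw [simplePole_plucker_eq_div l1 l2 l3 l4 lam _ _ _ _ _ _ h1 h2 h3 h4, h, zero_div]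

/-- The λ-dependent Plücker relation for simple-pole coefficients
`ω_ij(λ) = (1/(λ−λ_i) − 1/(λ−λ_j)) w_ij` holds for all λ outside the poles iff a single
λ-independent quadratic relation on the `w_ij` holds. -/
theorem stmt2 (l1 l2 l3 l4 : ℂ) (w12 w13 w14 w23 w24 w34 : ℂ)
    (h12 : l1 ≠ l2) (h13 : l1 ≠ l3) (h14 : l1 ≠ l4)
    (h23 : l2 ≠ l3) (h24 : l2 ≠ l4) (h34 : l3 ≠ l4) :
    (∀ lam : ℂ, lam ≠ l1 → lam ≠ l2 → lam ≠ l3 → lam ≠ l4 →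
      ((1/(lam - l2) - 1/(lam - l3)) * w23) * ((1/(lam - l1) - 1/(lam - l4)) * w14) -
      ((1/(lam - l1) - 1/(lam - l3)) * w13) * ((1/(lam - l2) - 1/(lam - l4)) * w24) +
      ((1/(lam - l1) - 1/(lam - l2)) * w12) * ((1/(lam - l3) - 1/(lam - l4)) * w34) = 0)
    ↔ (l3 - l2) * (l4 - l1) * w23 * w14 - (l3 - l1) * (l4 - l2) * w13 * w24 +
      (l2 - l1) * (l4 - l3) * w12 * w34 = 0 :=
  stmt2_general l1 l2 l3 l4 w12 w13 w14 w23 w24 w34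
end

section
/- Let w_{ij} = w_{ji} be smooth functions on an open subset of ℝ⁴ (or ℂ⁴), indexed by 1 ≤ i < j ≤ 4, and suppose λ₁,…,λ₄ are pairwise distinct. If the 2-form Ω(λ) = Σ_{i<j} (1/(λ−λ_i) − 1/(λ−λ_j)) w_{ij} dx_i ∧ dx_j is closed (dΩ = 0) for all λ outside {λ₁,…,λ₄}, then for all triples of distinct indices i,j,k one has ∂_k w_{ij} = ∂_j w_{ik} = ∂_i w_{jk}. -/
/-- Partial derivative `∂_k f` of a function on `ℝ⁴` at a point. -/
noncomputable def pd (k : Fin 4) (f : (Fin 4 → ℝ) → ℂ) (x : Fin 4 → ℝ) : ℂ :=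
  fderiv ℝ f x (Pi.single k 1)

lemma pd_const_mul (m : Fin 4) (c : ℂ) (f : (Fin 4 → ℝ) → ℂ) (x : Fin 4 → ℝ)
    (hf : DifferentiableAt ℝ f x) :
    pd m (fun y => c * f y) x = c * pd m f x := by
  unfold pd
  rw [fderiv_const_mul hf]
  simp

lemma cancel (A B C li lj lk : ℂ) (hij : li ≠ lj) (hik : li ≠ lk) (hjk : lj ≠ lk)
    (S : Set ℂ) (hS : S.Infinite)
    (hSsub : ∀ z ∈ S, z ≠ li ∧ z ≠ lj ∧ z ≠ lk)
    (h : ∀ z ∈ S,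
      (1/(z - lj) - 1/(z - lk)) * A + (1/(z - lk) - 1/(z - li)) * B +
        (1/(z - li) - 1/(z - lj)) * C = 0) :
    C = B ∧ A = C := by
  set X := Polynomial.X (R := ℂ)
  set P : Polynomial ℂ :=
    Polynomial.C A * ((X - Polynomial.C li) * (X - Polynomial.C lk)
        - (X - Polynomial.C li) * (X - Polynomial.C lj))
      + Polynomial.C B * ((X - Polynomial.C li) * (X - Polynomial.C lj)
        - (X - Polynomial.C lj) * (X - Polynomial.C lk))
      + Polynomial.C C * ((X - Polynomial.C lj) * (X - Polynomial.C lk)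
        - (X - Polynomial.C li) * (X - Polynomial.C lk)) with hP
  have hP0 : P = 0 := by
    apply Polynomial.eq_zero_of_infinite_isRoot
    apply hS.mono
    intro z hz
    obtain ⟨h1, h2, h3⟩ := hSsub z hz
    have e1 : z - li ≠ 0 := sub_ne_zero.mpr h1
    have e2 : z - lj ≠ 0 := sub_ne_zero.mpr h2
    have e3 : z - lk ≠ 0 := sub_ne_zero.mpr h3
    have heq := h z hz
    simp only [Set.mem_setOf_eq, Polynomial.IsRoot, hP, Polynomial.eval_add,
      Polynomial.eval_mul, Polynomial.eval_sub, Polynomial.eval_C, Polynomial.eval_X, X]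
    field_simp at heq
    have hD : (z - li) * ((z - lj) * (z - lk)) ≠ 0 := mul_ne_zero e1 (mul_ne_zero e2 e3)
    have key : (A * ((z - li) * (z - lk) - (z - li) * (z - lj)) +
        B * ((z - li) * (z - lj) - (z - lj) * (z - lk)) +
        C * ((z - lj) * (z - lk) - (z - li) * (z - lk))) * ((z - li) * ((z - lj) * (z - lk))) = 0 := by
      linear_combination ((z - li) * ((z - lj) * (z - lk))) * heq
    exact (mul_eq_zero.mp key).resolve_right hD
  have d1 : li - lj ≠ 0 := sub_ne_zero.mpr hij
  have d2 : li - lk ≠ 0 := sub_ne_zero.mpr hik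
  have d3 : lj - lk ≠ 0 := sub_ne_zero.mpr hjk
  have evi := congrArg (Polynomial.eval li) hP0
  have evj := congrArg (Polynomial.eval lj) hP0
  simp only [hP, Polynomial.eval_add, Polynomial.eval_mul, Polynomial.eval_sub,
    Polynomial.eval_C, Polynomial.eval_X, Polynomial.eval_zero, X] at evi evj
  constructor
  · have : (C - B) * ((li - lj) * (li - lk)) = 0 := by linear_combination evi
    rcases mul_eq_zero.mp this with h | h
    · exact sub_eq_zero.mp h
    · exact absurd h (mul_ne_zero d1 d2)
  · have : (A - C) * ((lj - li) * (lj - lk)) = 0 := by linear_combination evj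
    rcases mul_eq_zero.mp this with h | h
    · exact sub_eq_zero.mp h
    · exact absurd h (mul_ne_zero (sub_ne_zero.mpr (Ne.symm hij)) d3)

/-- If the 2-form `Ω(λ) = Σ_{i<j} (1/(λ−λ_i) − 1/(λ−λ_j)) w_ij dx_i ∧ dx_j` (with symmetric
smooth coefficients `w_ij`) is closed for all λ outside the poles, then
`∂_k w_ij = ∂_j w_ik = ∂_i w_jk` for all distinct `i,j,k`. -/
theorem stmt6 (U : Set (Fin 4 → ℝ)) (hU : IsOpen U)
    (l : Fin 4 → ℂ) (hl : Function.Injective l)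
    (w : Fin 4 → Fin 4 → (Fin 4 → ℝ) → ℂ)
    (hsymm : ∀ i j, w i j = w j i)
    (hsmooth : ∀ i j, ContDiffOn ℝ (⊤ : ℕ∞) (w i j) U)
    (hclosed : ∀ lam : ℂ, (∀ i, lam ≠ l i) → ∀ x ∈ U, ∀ i j k : Fin 4,
      pd i (fun y => (1/(lam - l j) - 1/(lam - l k)) * w j k y) x +
      pd j (fun y => (1/(lam - l k) - 1/(lam - l i)) * w k i y) x +
      pd k (fun y => (1/(lam - l i) - 1/(lam - l j)) * w i j y) x = 0) :
    ∀ x ∈ U, ∀ i j k : Fin 4, i ≠ j → i ≠ k → j ≠ k →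
      pd k (w i j) x = pd j (w i k) x ∧ pd j (w i k) x = pd i (w j k) x := by
  intro x hx i j k hij hik hjk
  have hdiff : ∀ a b, DifferentiableAt ℝ (w a b) x := fun a b =>
    ((hsmooth a b).differentiableOn (by simp)).differentiableAt (hU.mem_nhds hx)
  set S : Set ℂ := {z | ∀ m, z ≠ l m} with hSdef
  have hS : S.Infinite := by
    have : (Set.range l).Finite := Set.finite_range l
    have := this.infinite_compl
    apply this.mono
    intro z hz m
    simp only [Set.mem_compl_iff, Set.mem_range] at hz
    exact fun h => hz ⟨m, h.symm⟩
  have key := cancel (pd i (w j k) x) (pd j (w k i) x) (pd k (w i j) x)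
    (l i) (l j) (l k)
    (fun h => hij (hl h)) (fun h => hik (hl h)) (fun h => hjk (hl h))
    S hS (fun z hz => ⟨hz i, hz j, hz k⟩) ?_
  · refine ⟨?_, ?_⟩
    · rw [hsymm i k]; exact key.1
    · rw [hsymm i k]; rw [key.2.symm] at key; exact key.1.symm ▸ key.2.symm
  · intro z hz
    have heq := hclosed z hz x hx i j k
    rw [pd_const_mul i _ _ _ (hdiff j k), pd_const_mul j _ _ _ (hdiff k i),
      pd_const_mul k _ _ _ (hdiff i j)] at heq
    exact heq
end

section
/- Let λ₁,…,λ₄ be pairwise distinct complex numbers and let Θ be a smooth function of x₁,…,x₄ whose second derivatives satisfy the general heavenly equation (λ₃−λ₂)(λ₄−λ₁)Θ_{,23}Θ_{,14} − (λ₃−λ₁)(λ₄−λ₂)Θ_{,13}Θ_{,24} + (λ₂−λ₁)(λ₄−λ₃)Θ_{,12}Θ_{,34} = 0 at a point. Then the quantity G_{ijkl} = (λ_i−λ_j)(λ_k−λ_l)/(Θ_{,ik}Θ_{,jl} − Θ_{,il}Θ_{,jk}) is invariant under all permutations of the indices (i,j,k,l) of {1,2,3,4}, whenever all denominators are nonzero.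 -/
set_option linter.unreachableTactic false
set_option linter.unnecessarySeqFocus false
set_option linter.unusedTactic false

/-- Second mixed partial derivative `Θ_{,ij}` of a function on `ℝ⁴` at a point. -/
noncomputable def D2 (Θ : (Fin 4 → ℝ) → ℂ) (x : Fin 4 → ℝ) (i j : Fin 4) : ℂ :=
  fderiv ℝ (fun y => fderiv ℝ Θ y (Pi.single j 1)) x (Pi.single i 1)

lemma quad4 : ∀ z : Fin 4, z = 0 ∨ z = 1 ∨ z = 2 ∨ z = 3 := by decide

/-- Symmetry of second partial derivatives (Schwarz). -/
lemma D2_symm (Θ : (Fin 4 → ℝ) → ℂ) (hΘ : ContDiff ℝ (⊤ : ℕ∞) Θ) (x : Fin 4 → ℝ) (i j : Fin 4) :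
    D2 Θ x i j = D2 Θ x j i := by
  have hd : DifferentiableAt ℝ (fderiv ℝ Θ) x :=
    ((hΘ.fderiv_right (m := 1) (by exact WithTop.coe_le_coe.mpr le_top)).differentiable one_ne_zero) x
  unfold D2
  rw [fderiv_clm_apply hd (differentiableAt_const _),
      fderiv_clm_apply hd (differentiableAt_const _)]
  simp only [fderiv_fun_const, fderiv_const_apply, Pi.zero_apply, ContinuousLinearMap.comp_zero, zero_add,
    ContinuousLinearMap.add_apply, ContinuousLinearMap.flip_apply, ContinuousLinearMap.zero_apply]
  exact (hΘ.contDiffAt.isSymmSndFDerivAt (by rw [minSmoothness_of_isRCLikeNormedField]; exact WithTop.coe_le_coe.mpr le_top)) _ _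

/-- Every (numerator, denominator) pair for a quadruple of distinct indices agrees, up to a
common sign, with the one for one of the three canonical quadruples. -/
lemma key2 (l : Fin 4 → ℂ) (a : Fin 4 → Fin 4 → ℂ) (hsym : ∀ i j, a i j = a j i)
    (i j k m : Fin 4)
    (hij : i ≠ j) (hik : i ≠ k) (him : i ≠ m) (hjk : j ≠ k) (hjm : j ≠ m) (hkm : k ≠ m) :
    ∃ s : ℂ,
      ((l i - l j) * (l k - l m) = s * ((l 0 - l 1) * (l 2 - l 3)) ∧
         a i k * a j m - a i m * a j k = s * (a 0 2 * a 1 3 - a 0 3 * a 1 2)) ∨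
      ((l i - l j) * (l k - l m) = s * ((l 0 - l 2) * (l 1 - l 3)) ∧
         a i k * a j m - a i m * a j k = s * (a 0 1 * a 2 3 - a 0 3 * a 1 2)) ∨
      ((l i - l j) * (l k - l m) = s * ((l 0 - l 3) * (l 2 - l 1)) ∧
         a i k * a j m - a i m * a j k = s * (a 0 2 * a 1 3 - a 0 1 * a 2 3)) := by
  have h10 : a 1 0 = a 0 1 := hsym 1 0
  have h20 : a 2 0 = a 0 2 := hsym 2 0
  have h21 : a 2 1 = a 1 2 := hsym 2 1
  have h30 : a 3 0 = a 0 3 := hsym 3 0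
  have h31 : a 3 1 = a 1 3 := hsym 3 1
  have h32 : a 3 2 = a 2 3 := hsym 3 2
  rcases quad4 i with rfl|rfl|rfl|rfl
  ·
    rcases quad4 j with rfl|rfl|rfl|rfl
    · exact absurd rfl hij
    ·
      rcases quad4 k with rfl|rfl|rfl|rfl
      · exact absurd rfl hik
      · exact absurd rfl hjk
      ·
        rcases quad4 m with rfl|rfl|rfl|rfl
        · exact absurd rfl him
        · exact absurd rfl hjm
        · exact absurd rfl hkm
        ·
          exact ⟨1, Or.inl ⟨by ring, by (try simp only [h10, h20, h21, h30, h31, h32]) <;> ring1⟩⟩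
      ·
        rcases quad4 m with rfl|rfl|rfl|rfl
        · exact absurd rfl him
        · exact absurd rfl hjm
        ·
          exact ⟨(-1), Or.inl ⟨by ring, by (try simp only [h10, h20, h21, h30, h31, h32]) <;> ring1⟩⟩
        · exact absurd rfl hkm
    ·
      rcases quad4 k with rfl|rfl|rfl|rfl
      · exact absurd rfl hik
      ·
        rcases quad4 m with rfl|rfl|rfl|rfl
        · exact absurd rfl him
        · exact absurd rfl hkm
        · exact absurd rfl hjm
        ·
          exact ⟨1, Or.inr (Or.inl ⟨by ring, by (try simp only [h10, h20, h21, h30, h31, h32]) <;> ring1⟩)⟩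
      · exact absurd rfl hjk
      ·
        rcases quad4 m with rfl|rfl|rfl|rfl
        · exact absurd rfl him
        ·
          exact ⟨(-1), Or.inr (Or.inl ⟨by ring, by (try simp only [h10, h20, h21, h30, h31, h32]) <;> ring1⟩)⟩
        · exact absurd rfl hjm
        · exact absurd rfl hkm
    ·
      rcases quad4 k with rfl|rfl|rfl|rfl
      · exact absurd rfl hik
      ·
        rcases quad4 m with rfl|rfl|rfl|rfl
        · exact absurd rfl him
        · exact absurd rfl hkm
        ·
          exact ⟨(-1), Or.inr (Or.inr ⟨by ring, by (try simp only [h10, h20, h21, h30, h31, h32]) <;> ring1⟩)⟩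
        · exact absurd rfl hjm
      ·
        rcases quad4 m with rfl|rfl|rfl|rfl
        · exact absurd rfl him
        ·
          exact ⟨1, Or.inr (Or.inr ⟨by ring, by (try simp only [h10, h20, h21, h30, h31, h32]) <;> ring1⟩)⟩
        · exact absurd rfl hkm
        · exact absurd rfl hjm
      · exact absurd rfl hjk
  ·
    rcases quad4 j with rfl|rfl|rfl|rfl
    ·
      rcases quad4 k with rfl|rfl|rfl|rfl
      · exact absurd rfl hjk
      · exact absurd rfl hik
      ·
        rcases quad4 m with rfl|rfl|rfl|rfl
        · exact absurd rfl hjm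
        · exact absurd rfl him
        · exact absurd rfl hkm
        ·
          exact ⟨(-1), Or.inl ⟨by ring, by (try simp only [h10, h20, h21, h30, h31, h32]) <;> ring1⟩⟩
      ·
        rcases quad4 m with rfl|rfl|rfl|rfl
        · exact absurd rfl hjm
        · exact absurd rfl him
        ·
          exact ⟨1, Or.inl ⟨by ring, by (try simp only [h10, h20, h21, h30, h31, h32]) <;> ring1⟩⟩
        · exact absurd rfl hkm
    · exact absurd rfl hij
    ·
      rcases quad4 k with rfl|rfl|rfl|rfl
      ·
        rcases quad4 m with rfl|rfl|rfl|rfl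
        · exact absurd rfl hkm
        · exact absurd rfl him
        · exact absurd rfl hjm
        ·
          exact ⟨(-1), Or.inr (Or.inr ⟨by ring, by (try simp only [h10, h20, h21, h30, h31, h32]) <;> ring1⟩)⟩
      · exact absurd rfl hik
      · exact absurd rfl hjk
      ·
        rcases quad4 m with rfl|rfl|rfl|rfl
        ·
          exact ⟨1, Or.inr (Or.inr ⟨by ring, by (try simp only [h10, h20, h21, h30, h31, h32]) <;> ring1⟩)⟩
        · exact absurd rfl him
        · exact absurd rfl hjm
        · exact absurd rfl hkm
    ·
      rcases quad4 k with rfl|rfl|rfl|rfl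
      ·
        rcases quad4 m with rfl|rfl|rfl|rfl
        · exact absurd rfl hkm
        · exact absurd rfl him
        ·
          exact ⟨1, Or.inr (Or.inl ⟨by ring, by (try simp only [h10, h20, h21, h30, h31, h32]) <;> ring1⟩)⟩
        · exact absurd rfl hjm
      · exact absurd rfl hik
      ·
        rcases quad4 m with rfl|rfl|rfl|rfl
        ·
          exact ⟨(-1), Or.inr (Or.inl ⟨by ring, by (try simp only [h10, h20, h21, h30, h31, h32]) <;> ring1⟩)⟩
        · exact absurd rfl him
        · exact absurd rfl hkm
        · exact absurd rfl hjm
      · exact absurd rfl hjk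
  ·
    rcases quad4 j with rfl|rfl|rfl|rfl
    ·
      rcases quad4 k with rfl|rfl|rfl|rfl
      · exact absurd rfl hjk
      ·
        rcases quad4 m with rfl|rfl|rfl|rfl
        · exact absurd rfl hjm
        · exact absurd rfl hkm
        · exact absurd rfl him
        ·
          exact ⟨(-1), Or.inr (Or.inl ⟨by ring, by (try simp only [h10, h20, h21, h30, h31, h32]) <;> ring1⟩)⟩
      · exact absurd rfl hik
      ·
        rcases quad4 m with rfl|rfl|rfl|rfl
        · exact absurd rfl hjm
        ·
          exact ⟨1, Or.inr (Or.inl ⟨by ring, by (try simp only [h10, h20, h21, h30, h31, h32]) <;> ring1⟩)⟩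
        · exact absurd rfl him
        · exact absurd rfl hkm
    ·
      rcases quad4 k with rfl|rfl|rfl|rfl
      ·
        rcases quad4 m with rfl|rfl|rfl|rfl
        · exact absurd rfl hkm
        · exact absurd rfl hjm
        · exact absurd rfl him
        ·
          exact ⟨1, Or.inr (Or.inr ⟨by ring, by (try simp only [h10, h20, h21, h30, h31, h32]) <;> ring1⟩)⟩
      · exact absurd rfl hjk
      · exact absurd rfl hik
      ·
        rcases quad4 m with rfl|rfl|rfl|rfl
        ·
          exact ⟨(-1), Or.inr (Or.inr ⟨by ring, by (try simp only [h10, h20, h21, h30, h31, h32]) <;> ring1⟩)⟩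
        · exact absurd rfl hjm
        · exact absurd rfl him
        · exact absurd rfl hkm
    · exact absurd rfl hij
    ·
      rcases quad4 k with rfl|rfl|rfl|rfl
      ·
        rcases quad4 m with rfl|rfl|rfl|rfl
        · exact absurd rfl hkm
        ·
          exact ⟨1, Or.inl ⟨by ring, by (try simp only [h10, h20, h21, h30, h31, h32]) <;> ring1⟩⟩
        · exact absurd rfl him
        · exact absurd rfl hjm
      ·
        rcases quad4 m with rfl|rfl|rfl|rfl
        ·
          exact ⟨(-1), Or.inl ⟨by ring, by (try simp only [h10, h20, h21, h30, h31, h32]) <;> ring1⟩⟩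
        · exact absurd rfl hkm
        · exact absurd rfl him
        · exact absurd rfl hjm
      · exact absurd rfl hik
      · exact absurd rfl hjk
  ·
    rcases quad4 j with rfl|rfl|rfl|rfl
    ·
      rcases quad4 k with rfl|rfl|rfl|rfl
      · exact absurd rfl hjk
      ·
        rcases quad4 m with rfl|rfl|rfl|rfl
        · exact absurd rfl hjm
        · exact absurd rfl hkm
        ·
          exact ⟨1, Or.inr (Or.inr ⟨by ring, by (try simp only [h10, h20, h21, h30, h31, h32]) <;> ring1⟩)⟩
        · exact absurd rfl him
      ·
        rcases quad4 m with rfl|rfl|rfl|rfl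
        · exact absurd rfl hjm
        ·
          exact ⟨(-1), Or.inr (Or.inr ⟨by ring, by (try simp only [h10, h20, h21, h30, h31, h32]) <;> ring1⟩)⟩
        · exact absurd rfl hkm
        · exact absurd rfl him
      · exact absurd rfl hik
    ·
      rcases quad4 k with rfl|rfl|rfl|rfl
      ·
        rcases quad4 m with rfl|rfl|rfl|rfl
        · exact absurd rfl hkm
        · exact absurd rfl hjm
        ·
          exact ⟨(-1), Or.inr (Or.inl ⟨by ring, by (try simp only [h10, h20, h21, h30, h31, h32]) <;> ring1⟩)⟩
        · exact absurd rfl him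
      · exact absurd rfl hjk
      ·
        rcases quad4 m with rfl|rfl|rfl|rfl
        ·
          exact ⟨1, Or.inr (Or.inl ⟨by ring, by (try simp only [h10, h20, h21, h30, h31, h32]) <;> ring1⟩)⟩
        · exact absurd rfl hjm
        · exact absurd rfl hkm
        · exact absurd rfl him
      · exact absurd rfl hik
    ·
      rcases quad4 k with rfl|rfl|rfl|rfl
      ·
        rcases quad4 m with rfl|rfl|rfl|rfl
        · exact absurd rfl hkm
        ·
          exact ⟨(-1), Or.inl ⟨by ring, by (try simp only [h10, h20, h21, h30, h31, h32]) <;> ring1⟩⟩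
        · exact absurd rfl hjm
        · exact absurd rfl him
      ·
        rcases quad4 m with rfl|rfl|rfl|rfl
        ·
          exact ⟨1, Or.inl ⟨by ring, by (try simp only [h10, h20, h21, h30, h31, h32]) <;> ring1⟩⟩
        · exact absurd rfl hkm
        · exact absurd rfl hjm
        · exact absurd rfl him
      · exact absurd rfl hjk
      · exact absurd rfl hik
    · exact absurd rfl hij

/-- The Gindikin factor `G_{ijkl} = (λ_i−λ_j)(λ_k−λ_l)/(Θ_{,ik}Θ_{,jl} − Θ_{,il}Θ_{,jk})` is
invariant under all permutations of the indices, provided `Θ` satisfies the general heavenly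
equation at the point and all denominators are nonzero. -/
theorem stmt8 (l : Fin 4 → ℂ) (hl : Function.Injective l)
    (Θ : (Fin 4 → ℝ) → ℂ) (hΘ : ContDiff ℝ (⊤ : ℕ∞) Θ) (x : Fin 4 → ℝ)
    (hGHE : (l 2 - l 1) * (l 3 - l 0) * D2 Θ x 1 2 * D2 Θ x 0 3 -
            (l 2 - l 0) * (l 3 - l 1) * D2 Θ x 0 2 * D2 Θ x 1 3 +
            (l 1 - l 0) * (l 3 - l 2) * D2 Θ x 0 1 * D2 Θ x 2 3 = 0) :
    ∀ σ τ : Equiv.Perm (Fin 4),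
      D2 Θ x (σ 0) (σ 2) * D2 Θ x (σ 1) (σ 3) - D2 Θ x (σ 0) (σ 3) * D2 Θ x (σ 1) (σ 2) ≠ 0 →
      D2 Θ x (τ 0) (τ 2) * D2 Θ x (τ 1) (τ 3) - D2 Θ x (τ 0) (τ 3) * D2 Θ x (τ 1) (τ 2) ≠ 0 →
      (l (σ 0) - l (σ 1)) * (l (σ 2) - l (σ 3)) /
        (D2 Θ x (σ 0) (σ 2) * D2 Θ x (σ 1) (σ 3) - D2 Θ x (σ 0) (σ 3) * D2 Θ x (σ 1) (σ 2)) =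
      (l (τ 0) - l (τ 1)) * (l (τ 2) - l (τ 3)) /
        (D2 Θ x (τ 0) (τ 2) * D2 Θ x (τ 1) (τ 3) - D2 Θ x (τ 0) (τ 3) * D2 Θ x (τ 1) (τ 2)) := by
  intro σ τ hσ hτ
  have hsym : ∀ i j, D2 Θ x i j = D2 Θ x j i := D2_symm Θ hΘ x
  obtain ⟨s, hs⟩ := key2 l (D2 Θ x) hsym (σ 0) (σ 1) (σ 2) (σ 3)
    (σ.injective.ne (by decide)) (σ.injective.ne (by decide)) (σ.injective.ne (by decide))
    (σ.injective.ne (by decide)) (σ.injective.ne (by decide)) (σ.injective.ne (by decide))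
  obtain ⟨t, ht⟩ := key2 l (D2 Θ x) hsym (τ 0) (τ 1) (τ 2) (τ 3)
    (τ.injective.ne (by decide)) (τ.injective.ne (by decide)) (τ.injective.ne (by decide))
    (τ.injective.ne (by decide)) (τ.injective.ne (by decide)) (τ.injective.ne (by decide))
  rw [div_eq_div_iff hσ hτ]
  rcases hs with ⟨hN, hD⟩ | ⟨hN, hD⟩ | ⟨hN, hD⟩ <;>
    rcases ht with ⟨hN', hD'⟩ | ⟨hN', hD'⟩ | ⟨hN', hD'⟩ <;>
    rw [hN, hD, hN', hD'] <;>
    first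
      | ring1
      | linear_combination (s * t) * hGHE
      | linear_combination (-(s * t)) * hGHE
end

section
/- Let λ₁,…,λ_N be pairwise distinct complex numbers, w_{ij} = w_{ji} complex numbers, and λ ∉ {λ₁,…,λ_N}. Define the 2-form Ω = Σ_{i<j} (1/(λ−λ_i) − 1/(λ−λ_j)) w_{ij} dx_i ∧ dx_j and, for distinct i,j,k, the vector field U_{ijk} = (1/(λ−λ_i) − 1/(λ−λ_j)) w_{ij} ∂_k + (1/(λ−λ_j) − 1/(λ−λ_k)) w_{jk} ∂_i + (1/(λ−λ_k) − 1/(λ−λ_i)) w_{ki} ∂_j. If the w_{ij} satisfy (λ_k−λ_j)(λ_l−λ_i)w_{jk}w_{il} − (λ_k−λ_i)(λ_l−λ_j)w_{ik}w_{jl} + (λ_j−λ_i)(λ_l−λ_k)w_{ij}w_{kl} = 0 for all distinct quadruples (i,j,k,l), then the interior product i_{U_{ijk}} Ω = 0. -/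
set_option maxHeartbeats 1600000


/-- The vector fields `U_{ijk}` annihilate the 2-form `Ω` (their interior product with `Ω`,
computed in coordinates as the 1-form `Σ_q (Σ_p v_p ω_pq) dx_q`, vanishes), provided the
coefficients `w_ij` satisfy the Plücker (general heavenly) relations. -/
theorem stmt10 {N : ℕ} (l : Fin N → ℂ) (hl : Function.Injective l)
    (lam : ℂ) (hlam : ∀ i, lam ≠ l i)
    (w : Fin N → Fin N → ℂ) (hsymm : ∀ i j, w i j = w j i)
    (hPluk : ∀ i j k m : Fin N, i ≠ j → i ≠ k → i ≠ m → j ≠ k → j ≠ m → k ≠ m →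
      (l k - l j) * (l m - l i) * w j k * w i m -
      (l k - l i) * (l m - l j) * w i k * w j m +
      (l j - l i) * (l m - l k) * w i j * w k m = 0)
    (i j k : Fin N) (hij : i ≠ j) (hik : i ≠ k) (hjk : j ≠ k)
    (v : Fin N → ℂ)
    (hv : v = fun p =>
      if p = k then (1/(lam - l i) - 1/(lam - l j)) * w i j
      else if p = i then (1/(lam - l j) - 1/(lam - l k)) * w j k
      else if p = j then (1/(lam - l k) - 1/(lam - l i)) * w k i
      else 0) :
    ∀ q : Fin N, ∑ p : Fin N, v p * ((1/(lam - l p) - 1/(lam - l q)) * w p q) = 0 := by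
  intro q
  subst hv
  have h0 : ∀ p : Fin N, lam - l p ≠ 0 := fun p => sub_ne_zero.mpr (hlam p)
  have hsub : ({k, i, j} : Finset (Fin N)) ⊆ Finset.univ := Finset.subset_univ _
  rw [← Finset.sum_subset hsub (by
    intro p _ hp
    simp only [Finset.mem_insert, Finset.mem_singleton, not_or] at hp
    simp [hp.1, hp.2.1, hp.2.2])]
  have hki : k ∉ ({i, j} : Finset (Fin N)) := by simp [Ne.symm hik, Ne.symm hjk]
  have hij' : i ∉ ({j} : Finset (Fin N)) := by simp [hij]
  rw [Finset.sum_insert hki, Finset.sum_insert hij', Finset.sum_singleton]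
  simp only [eq_self_iff_true, if_true, if_neg hik, if_neg hjk, if_neg (Ne.symm hij)]
  by_cases hqi : q = i
  · subst hqi
    rw [hsymm k q, hsymm j q]
    field_simp
    ring
  by_cases hqj : q = j
  · subst hqj
    rw [hsymm k q]
    field_simp
    ring
  by_cases hqk : q = k
  · subst hqk
    rw [hsymm q i]
    field_simp
    ring
  · have key := hPluk i j k q hij hik (fun h => hqi h.symm) hjk (fun h => hqj h.symm) (fun h => hqk h.symm)
    rw [hsymm k i]
    have expand : (1 / (lam - l i) - 1 / (lam - l j)) * w i j *
          ((1 / (lam - l k) - 1 / (lam - l q)) * w k q) +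
        ((1 / (lam - l j) - 1 / (lam - l k)) * w j k *
          ((1 / (lam - l i) - 1 / (lam - l q)) * w i q) +
        (1 / (lam - l k) - 1 / (lam - l i)) * w i k *
          ((1 / (lam - l j) - 1 / (lam - l q)) * w j q)) =
        ((l k - l j) * (l q - l i) * w j k * w i q -
         (l k - l i) * (l q - l j) * w i k * w j q +
         (l j - l i) * (l q - l k) * w i j * w k q) /
        ((lam - l i) * (lam - l j) * (lam - l k) * (lam - l q)) := by
      rw [div_sub_div _ _ (h0 i) (h0 j), div_sub_div _ _ (h0 j) (h0 k),
        div_sub_div _ _ (h0 k) (h0 i), div_sub_div _ _ (h0 k) (h0 q),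
        div_sub_div _ _ (h0 i) (h0 q), div_sub_div _ _ (h0 j) (h0 q)]
      field_simp
      ring
    rw [expand, key, zero_div]
end

section
/- Let λ₁,…,λ₄ be pairwise distinct and let Θ̃ be a smooth function satisfying (λ₂−λ₄)Θ̃_{,24} + (λ₃−λ₂)Θ̃_{,23} + (λ₄−λ₁)Θ̃_{,14} + (λ₁−λ₃)Θ̃_{,13} = (λ₃−λ₂)(λ₄−λ₁)Θ̃_{,23}Θ̃_{,14} − (λ₃−λ₁)(λ₄−λ₂)Θ̃_{,13}Θ̃_{,24} + (λ₂−λ₁)(λ₄−λ₃)Θ̃_{,12}Θ̃_{,34}. Then Θ = Θ₀ + Θ̃ with Θ₀ = x₁x₃/(λ₁−λ₃) + x₁x₄/(λ₁−λ₄) + x₂x₃/(λ₂−λ₃) + x₂x₄/(λ₂−λ₄) satisfies the general heavenly equation (λ₃−λ₂)(λ₄−λ₁)Θ_{,23}Θ_{,14} − (λ₃−λ₁)(λ₄−λ₂)Θ_{,13}Θ_{,24} + (λ₂−λ₁)(λ₄−λ₃)Θ_{,12}Θ_{,34} = 0, and conversely. -/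
noncomputable def mono (a b : Fin 4) (c : ℂ) : (Fin 4 → ℝ) → ℂ :=
  fun x => (x a * x b) • c

lemma mono_contDiff (a b : Fin 4) (c : ℂ) : ContDiff ℝ (⊤ : ℕ∞) (mono a b c) :=
  (((ContinuousLinearMap.proj a : ((Fin 4) → ℝ) →L[ℝ] ℝ).contDiff).mul
    ((ContinuousLinearMap.proj b : ((Fin 4) → ℝ) →L[ℝ] ℝ).contDiff)).smul contDiff_const

lemma fderiv_mono_apply (a b : Fin 4) (c : ℂ) (y v : Fin 4 → ℝ) :
    fderiv ℝ (mono a b c) y v = (y a * v b + y b * v a) • c := by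
  have h : HasFDerivAt (mono a b c)
      (((y a • (ContinuousLinearMap.proj b : ((Fin 4) → ℝ) →L[ℝ] ℝ) +
         y b • (ContinuousLinearMap.proj a : ((Fin 4) → ℝ) →L[ℝ] ℝ))).smulRight c) y := by
    exact (((ContinuousLinearMap.proj a : ((Fin 4) → ℝ) →L[ℝ] ℝ).hasFDerivAt.mul
      (ContinuousLinearMap.proj b : ((Fin 4) → ℝ) →L[ℝ] ℝ).hasFDerivAt)).smul_const c
  rw [h.fderiv]
  simp [ContinuousLinearMap.smulRight_apply, smul_smul]

lemma D2_mono (a b i j : Fin 4) (c : ℂ) (x : Fin 4 → ℝ) :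
    D2 (mono a b c) x i j =
      (((Pi.single j 1 : Fin 4 → ℝ) b * (Pi.single i 1 : Fin 4 → ℝ) a +
       (Pi.single j 1 : Fin 4 → ℝ) a * (Pi.single i 1 : Fin 4 → ℝ) b) : ℝ) • c := by
  unfold D2
  have h1 : (fun y => fderiv ℝ (mono a b c) y (Pi.single j 1)) =
      fun y : Fin 4 → ℝ =>
        (((Pi.single j 1 : Fin 4 → ℝ) b • (ContinuousLinearMap.proj a : ((Fin 4) → ℝ) →L[ℝ] ℝ) +
          (Pi.single j 1 : Fin 4 → ℝ) a • (ContinuousLinearMap.proj b : ((Fin 4) → ℝ) →L[ℝ] ℝ)).smulRight c) y := by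
    funext y
    rw [fderiv_mono_apply]
    simp only [ContinuousLinearMap.smulRight_apply, ContinuousLinearMap.add_apply,
      ContinuousLinearMap.coe_smul', Pi.smul_apply, ContinuousLinearMap.proj_apply,
      smul_eq_mul]
    congr 1
    ring
  rw [h1, ContinuousLinearMap.fderiv]
  simp [ContinuousLinearMap.smulRight_apply]

lemma D2_add (f g : (Fin 4 → ℝ) → ℂ) (hf : ContDiff ℝ (⊤ : ℕ∞) f) (hg : ContDiff ℝ (⊤ : ℕ∞) g)
    (x : Fin 4 → ℝ) (i j : Fin 4) :
    D2 (fun y => f y + g y) x i j = D2 f x i j + D2 g x i j := by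
  have hdf : ∀ y, DifferentiableAt ℝ f y := fun y => (hf.differentiable (by simp)) y
  have hdg : ∀ y, DifferentiableAt ℝ g y := fun y => (hg.differentiable (by simp)) y
  have h1 : (fun y => fderiv ℝ (fun z => f z + g z) y (Pi.single j 1)) =
      fun y => fderiv ℝ f y (Pi.single j 1) + fderiv ℝ g y (Pi.single j 1) := by
    funext y
    rw [fderiv_fun_add (hdf y) (hdg y)]
    simp
  have hcf : ContDiff ℝ (⊤ : ℕ∞) (fun y => fderiv ℝ f y (Pi.single j 1)) :=
    (hf.fderiv_right (by simp)).clm_apply contDiff_const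
  have hcg : ContDiff ℝ (⊤ : ℕ∞) (fun y => fderiv ℝ g y (Pi.single j 1)) :=
    (hg.fderiv_right (by simp)).clm_apply contDiff_const
  unfold D2
  rw [h1, fderiv_fun_add ((hcf.differentiable (by simp)) x) ((hcg.differentiable (by simp)) x)]
  simp

/-- `Θ̃` satisfies the generating relation for the second heavenly equation hierarchy iff
`Θ = Θ₀ + Θ̃`, with the vacuum term `Θ₀ = x₁x₃/(λ₁−λ₃) + x₁x₄/(λ₁−λ₄) + x₂x₃/(λ₂−λ₃) +
x₂x₄/(λ₂−λ₄)`, satisfies the general heavenly equation. -/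
theorem stmt12 (l : Fin 4 → ℂ) (hl : Function.Injective l)
    (Θt : (Fin 4 → ℝ) → ℂ) (hΘt : ContDiff ℝ (⊤ : ℕ∞) Θt)
    (Θ : (Fin 4 → ℝ) → ℂ)
    (hΘ : Θ = fun x => ((x 0 * x 2 : ℝ) : ℂ) / (l 0 - l 2) +
                        ((x 0 * x 3 : ℝ) : ℂ) / (l 0 - l 3) +
                        ((x 1 * x 2 : ℝ) : ℂ) / (l 1 - l 2) +
                        ((x 1 * x 3 : ℝ) : ℂ) / (l 1 - l 3) + Θt x) :
    (∀ x : Fin 4 → ℝ,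
      (l 1 - l 3) * D2 Θt x 1 3 + (l 2 - l 1) * D2 Θt x 1 2 +
      (l 3 - l 0) * D2 Θt x 0 3 + (l 0 - l 2) * D2 Θt x 0 2 =
      (l 2 - l 1) * (l 3 - l 0) * D2 Θt x 1 2 * D2 Θt x 0 3 -
      (l 2 - l 0) * (l 3 - l 1) * D2 Θt x 0 2 * D2 Θt x 1 3 +
      (l 1 - l 0) * (l 3 - l 2) * D2 Θt x 0 1 * D2 Θt x 2 3)
    ↔ (∀ x : Fin 4 → ℝ,
      (l 2 - l 1) * (l 3 - l 0) * D2 Θ x 1 2 * D2 Θ x 0 3 -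
      (l 2 - l 0) * (l 3 - l 1) * D2 Θ x 0 2 * D2 Θ x 1 3 +
      (l 1 - l 0) * (l 3 - l 2) * D2 Θ x 0 1 * D2 Θ x 2 3 = 0) := by
  have h02 : l 0 - l 2 ≠ 0 := sub_ne_zero.mpr (hl.ne (by decide))
  have h03 : l 0 - l 3 ≠ 0 := sub_ne_zero.mpr (hl.ne (by decide))
  have h12 : l 1 - l 2 ≠ 0 := sub_ne_zero.mpr (hl.ne (by decide))
  have h13 : l 1 - l 3 ≠ 0 := sub_ne_zero.mpr (hl.ne (by decide))
  set c02 : ℂ := (l 0 - l 2)⁻¹ with hc02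
  set c03 : ℂ := (l 0 - l 3)⁻¹ with hc03
  set c12 : ℂ := (l 1 - l 2)⁻¹ with hc12
  set c13 : ℂ := (l 1 - l 3)⁻¹ with hc13
  have hΘ' : Θ = fun y => (fun z => mono 0 2 c02 z + mono 0 3 c03 z + mono 1 2 c12 z +
      mono 1 3 c13 z) y + Θt y := by
    rw [hΘ]; funext y
    simp only [mono, Complex.real_smul, div_eq_mul_inv]
    rw [hc02, hc03, hc12, hc13]
  have hsum : ContDiff ℝ (⊤ : ℕ∞) (fun z => mono 0 2 c02 z + mono 0 3 c03 z + mono 1 2 c12 z +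
      mono 1 3 c13 z) :=
    (((mono_contDiff 0 2 c02).add (mono_contDiff 0 3 c03)).add (mono_contDiff 1 2 c12)).add
      (mono_contDiff 1 3 c13)
  have gen : ∀ (x : Fin 4 → ℝ) (i j : Fin 4), D2 Θ x i j =
      D2 (mono 0 2 c02) x i j + D2 (mono 0 3 c03) x i j + D2 (mono 1 2 c12) x i j +
      D2 (mono 1 3 c13) x i j + D2 Θt x i j := by
    intro x i j
    rw [hΘ']
    have e1 : D2 (fun y => (fun z => mono 0 2 c02 z + mono 0 3 c03 z + mono 1 2 c12 z +
        mono 1 3 c13 z) y + Θt y) x i j =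
        D2 (fun z => mono 0 2 c02 z + mono 0 3 c03 z + mono 1 2 c12 z + mono 1 3 c13 z) x i j +
        D2 Θt x i j := D2_add _ _ hsum hΘt x i j
    have e2 : D2 (fun z => (fun w => mono 0 2 c02 w + mono 0 3 c03 w + mono 1 2 c12 w) z +
        mono 1 3 c13 z) x i j =
        D2 (fun w => mono 0 2 c02 w + mono 0 3 c03 w + mono 1 2 c12 w) x i j +
        D2 (mono 1 3 c13) x i j :=
      D2_add _ _ (((mono_contDiff 0 2 c02).add (mono_contDiff 0 3 c03)).add
        (mono_contDiff 1 2 c12)) (mono_contDiff 1 3 c13) x i j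
    have e3 : D2 (fun z => (fun w => mono 0 2 c02 w + mono 0 3 c03 w) z + mono 1 2 c12 z) x i j =
        D2 (fun w => mono 0 2 c02 w + mono 0 3 c03 w) x i j + D2 (mono 1 2 c12) x i j :=
      D2_add _ _ ((mono_contDiff 0 2 c02).add (mono_contDiff 0 3 c03)) (mono_contDiff 1 2 c12) x i j
    have e4 : D2 (fun z => mono 0 2 c02 z + mono 0 3 c03 z) x i j =
        D2 (mono 0 2 c02) x i j + D2 (mono 0 3 c03) x i j :=
      D2_add _ _ (mono_contDiff 0 2 c02) (mono_contDiff 0 3 c03) x i j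
    rw [e1, e2, e3, e4]
  have k12 : ∀ x, D2 Θ x 1 2 = c12 + D2 Θt x 1 2 := by
    intro x; rw [gen x 1 2]; simp [D2_mono, Pi.single_apply]
  have k03 : ∀ x, D2 Θ x 0 3 = c03 + D2 Θt x 0 3 := by
    intro x; rw [gen x 0 3]; simp [D2_mono, Pi.single_apply]
  have k02 : ∀ x, D2 Θ x 0 2 = c02 + D2 Θt x 0 2 := by
    intro x; rw [gen x 0 2]; simp [D2_mono, Pi.single_apply]
  have k13 : ∀ x, D2 Θ x 1 3 = c13 + D2 Θt x 1 3 := by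
    intro x; rw [gen x 1 3]; simp [D2_mono, Pi.single_apply]
  have k01 : ∀ x, D2 Θ x 0 1 = D2 Θt x 0 1 := by
    intro x; rw [gen x 0 1]; simp [D2_mono, Pi.single_apply]
  have k23 : ∀ x, D2 Θ x 2 3 = D2 Θt x 2 3 := by
    intro x; rw [gen x 2 3]; simp [D2_mono, Pi.single_apply]
  have iden : ∀ x : Fin 4 → ℝ,
      (l 2 - l 1) * (l 3 - l 0) * D2 Θ x 1 2 * D2 Θ x 0 3 -
      (l 2 - l 0) * (l 3 - l 1) * D2 Θ x 0 2 * D2 Θ x 1 3 +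
      (l 1 - l 0) * (l 3 - l 2) * D2 Θ x 0 1 * D2 Θ x 2 3 =
      ((l 2 - l 1) * (l 3 - l 0) * D2 Θt x 1 2 * D2 Θt x 0 3 -
       (l 2 - l 0) * (l 3 - l 1) * D2 Θt x 0 2 * D2 Θt x 1 3 +
       (l 1 - l 0) * (l 3 - l 2) * D2 Θt x 0 1 * D2 Θt x 2 3) -
      ((l 1 - l 3) * D2 Θt x 1 3 + (l 2 - l 1) * D2 Θt x 1 2 +
       (l 3 - l 0) * D2 Θt x 0 3 + (l 0 - l 2) * D2 Θt x 0 2) := by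
    intro x
    rw [k12 x, k03 x, k02 x, k13 x, k01 x, k23 x, hc02, hc03, hc12, hc13]
    field_simp
    ring
  constructor
  · intro h x
    rw [iden x]
    linear_combination -(h x)
  · intro h x
    have hx := h x
    rw [iden x] at hx
    linear_combination -hx
end
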